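/- Let ε ≥ 0 and 0 < p < e^{−ε}. If the crediting rollout G̃_p of the counterexample predictor M̃_p is (ε',0)-CCA for some ε' ≥ 0, then ε' ≥ −ln p. -/

import Mathlib

open scoped ENNReal Classical

noncomputable section

namespace CCA

variable {α X D Y : Type*}

/-- Conditional probability of an event `E` given event `B`, for a set function `P`. -/
def prCond (P : Set α → ℝ≥0∞) (B : Set α) : Set α → ℝ≥0∞ := fun E => P (E ∩ B) / P B

/-- `(ε,δ)`-closeness of two set functions, as in differential privacy. -/
def Close (ε δ : ℝ) (P Q : Set α → ℝ≥0∞) : Prop :=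
  ∀ E : Set α,
    P E ≤ ENNReal.ofReal (Real.exp ε) * Q E + ENNReal.ofReal δ ∧
    Q E ≤ ENNReal.ofReal (Real.exp ε) * P E + ENNReal.ofReal δ

/-- `(ε,δ)`-counterfactual credit attribution for a kernel `K` mapping a dataset `S` and a
prompt `x` to a (sub)probability set function over (output, credit set) pairs: for every
prompt, dataset and `s ∈ S`, either `s` is credited with probability `1`, or the conditional
distribution given `s` not credited is `(ε,δ)`-close to the counterfactual on `S \ {s}`. -/
def IsCCA (ε δ : ℝ) (K : Set D → List X → Set (Y × Set D) → ℝ≥0∞) : Prop :=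
  ∀ (S : Set D) (x : List X) (s : D), s ∈ S →
    K S x {q | s ∈ q.2} = 1 ∨
    Close ε δ (prCond (K S x) {q | s ∉ q.2}) (K (S \ {s}) x)

/-- The event kernel associated with a PMF-valued crediting algorithm. -/
def pmfKernel (M : Set D → List X → PMF (Y × Set D)) :
    Set D → List X → Set (Y × Set D) → ℝ≥0∞ :=
  fun S x E => (M S x).toOuterMeasure E

/-- Probability that the crediting rollout of `M` on current prompt `x` produces exactly the
trace `w` of (token, credit set) pairs. -/
def traceProb (M : Set D → List X → PMF (X × Set D)) (S : Set D) :
    List X → List (X × Set D) → ℝ≥0∞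
  | _, [] => 1
  | x, q :: w => M S x q * traceProb M S (x ++ [q.1]) w

/-- A terminal trace: the last generated token is `bot` and no earlier token is `bot`. -/
def IsTerminal (bot : X) (w : List (X × Set D)) : Prop :=
  (w.map Prod.fst).getLast? = some bot ∧ ∀ y ∈ (w.map Prod.fst).dropLast, y ≠ bot

/-- The union of the credit sets appearing along a trace. -/
def creditOf (w : List (X × Set D)) : Set D := w.foldr (fun q acc => q.2 ∪ acc) ∅

/-- Probability that the crediting rollout of `M` on `(S, x0)` outputs the
(generated string, credit set) pair `o`. -/
def rolloutProb (bot : X) (M : Set D → List X → PMF (X × Set D)) (S : Set D)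
    (x0 : List X) (o : List X × Set D) : ℝ≥0∞ :=
  ∑' w : {w : List (X × Set D) //
      IsTerminal bot w ∧ x0 ++ w.map Prod.fst = o.1 ∧ creditOf w = o.2},
    traceProb M S x0 w.1

/-- Event kernel of the crediting rollout of `M`. -/
def rolloutK (bot : X) (M : Set D → List X → PMF (X × Set D)) :
    Set D → List X → Set (List X × Set D) → ℝ≥0∞ :=
  fun S x0 E => ∑' o : E, rolloutProb bot M S x0 ↑o

/-- Coin flip: `true` with probability `min p 1`. -/
def coin (p : ℝ≥0∞) : PMF Bool :=
  PMF.ofFintype (fun b => cond b (min p 1) (1 - min p 1))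
    (by rw [Fintype.sum_bool]; exact add_tsub_cancel_of_le (min_le_right p 1))

/-- Two-point distribution: `x` with probability `p` (clipped at `1`), else `y`. -/
def twoPoint (p : ℝ≥0∞) (x y : α) : PMF α := PMF.map (fun b => if b then x else y) (coin p)

/-- The token alphabet `{a, b, ⊥}` of the counterexample predictor. -/
inductive Tok : Type
  | a : Tok
  | b : Tok
  | bot : Tok
deriving DecidableEq

/-- The counterexample crediting next-token predictor `M̃_p`, over the data universe
`Unit = {s1}` (datasets and credit sets are `Set Unit`, with `{()} = {s1}`). -/
def Mp (p : ℝ) (S : Set Unit) (x : List Tok) : PMF (Tok × Set Unit) :=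
  if x = [] then twoPoint (ENNReal.ofReal p) (Tok.a, (∅ : Set Unit)) (Tok.b, ∅)
  else if x = [Tok.a] then
    if S = ∅ then PMF.pure (Tok.b, ∅)
    else twoPoint (1 / 2) (Tok.a, Set.univ) (Tok.b, ∅)
  else if x = [Tok.b] then
    if S = ∅ then PMF.pure (Tok.a, ∅) else PMF.pure (Tok.a, Set.univ)
  else PMF.pure (Tok.bot, ∅)

/-!
With the full dataset `{s₁}`, the only run of `M̃_p` that does not credit `s₁` is `a b ⊥`
(probability `p/2`), so conditioned on `s₁` not being credited the rollout outputs `a b ⊥`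
almost surely. Without `s₁` the rollout outputs `a b ⊥` only with probability `p`, so
`(ε', 0)`-closeness forces `1 ≤ e^{ε'} p`. The other alternative of the CCA condition, that `s₁`
is credited almost surely, fails because `p > 0`.
-/

theorem _root_.PMF.toOuterMeasure_ne_one_of_compl_ne_zero {β : Type*} {μ : PMF β} {s : Set β}
    (h : μ.toOuterMeasure sᶜ ≠ 0) : μ.toOuterMeasure s ≠ 1 := by
  rw [Ne, PMF.toOuterMeasure_apply_eq_one_iff]
  rw [Ne, PMF.toOuterMeasure_apply_eq_zero_iff] at h
  exact fun hs => h (disjoint_compl_right.mono_left hs)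

def rolloutOutcome (x₀ : List X) (w : List (X × Set D)) : List X × Set D :=
  (x₀ ++ w.map Prod.fst, creditOf w)

theorem rolloutProb_eq_tsum (bot : X) (M : Set D → List X → PMF (X × Set D)) (S : Set D)
    (x₀ : List X) (o : List X × Set D) :
    rolloutProb bot M S x₀ o =
      ∑' w, if IsTerminal bot w ∧ rolloutOutcome x₀ w = o then traceProb M S x₀ w else 0 := by
  refine (tsum_subtype {w | IsTerminal bot w ∧ x₀ ++ w.map Prod.fst = o.1 ∧ creditOf w = o.2}
    (traceProb M S x₀)).trans ?_
  simp only [Set.indicator_apply, Set.mem_ofPred_eq, rolloutOutcome, Prod.ext_iff]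

theorem rolloutK_eq_tsum (bot : X) (M : Set D → List X → PMF (X × Set D)) (S : Set D)
    (x₀ : List X) (E : Set (List X × Set D)) :
    rolloutK bot M S x₀ E =
      ∑' w, if IsTerminal bot w ∧ rolloutOutcome x₀ w ∈ E then traceProb M S x₀ w else 0 := by
  simp_rw [rolloutK, rolloutProb_eq_tsum]
  rw [ENNReal.tsum_comm]
  refine tsum_congr fun w => ?_
  rw [tsum_subtype E fun o => if IsTerminal bot w ∧ rolloutOutcome x₀ w = o then
      traceProb M S x₀ w else 0,
    ← tsum_ite_eq (rolloutOutcome x₀ w) fun _ => if IsTerminal bot w ∧ rolloutOutcome x₀ w ∈ E then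
      traceProb M S x₀ w else 0]
  exact tsum_congr fun o => by grind [Set.indicator_apply]

theorem mem_support_twoPoint {r : ℝ≥0∞} {x y z : α} (h : z ∈ (twoPoint r x y).support) :
    z = x ∨ z = y := by
  obtain ⟨b, -, rfl⟩ := (PMF.support_map _ _ ▸ h : z ∈ _ '' _)
  cases b <;> simp

theorem toOuterMeasure_twoPoint_bind {β : Type*} (r : ℝ≥0∞) (x y : α) (f : α → PMF β)
    (s : Set β) :
    ((twoPoint r x y).bind f).toOuterMeasure s =
      min r 1 * (f x).toOuterMeasure s + (1 - min r 1) * (f y).toOuterMeasure s := by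
  simp [twoPoint, PMF.bind_map, PMF.toOuterMeasure_bind_apply, coin]

theorem toOuterMeasure_twoPoint (r : ℝ≥0∞) (x y : α) (s : Set α) :
    (twoPoint r x y).toOuterMeasure s =
      min r 1 * s.indicator 1 x + (1 - min r 1) * s.indicator 1 y := by
  rw [← PMF.bind_pure (twoPoint r x y), toOuterMeasure_twoPoint_bind]
  simp [PMF.toOuterMeasure_pure_apply, Set.indicator_apply]

namespace Mp

variable {p : ℝ} {S : Set Unit}

theorem nil : Mp p S [] = twoPoint (ENNReal.ofReal p) (Tok.a, ∅) (Tok.b, ∅) := by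
  simp [Mp]

theorem singleton_a_univ :
    Mp p Set.univ [Tok.a] = twoPoint (1 / 2) (Tok.a, Set.univ) (Tok.b, ∅) := by
  simp [Mp]

theorem singleton_a_empty : Mp p ∅ [Tok.a] = PMF.pure (Tok.b, ∅) := by
  simp [Mp]

theorem singleton_b_univ : Mp p Set.univ [Tok.b] = PMF.pure (Tok.a, Set.univ) := by
  simp [Mp]

theorem singleton_b_empty : Mp p ∅ [Tok.b] = PMF.pure (Tok.a, ∅) := by
  simp [Mp]

theorem cons_cons (t₁ t₂ : Tok) (x : List Tok) :
    Mp p S (t₁ :: t₂ :: x) = PMF.pure (Tok.bot, ∅) := by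
  simp [Mp]

theorem fst_ne_bot_of_mem_support_nil {q : Tok × Set Unit} (h : q ∈ (Mp p S []).support) :
    q.1 ≠ Tok.bot := by
  rw [nil] at h
  rcases mem_support_twoPoint h with rfl | rfl <;> simp

theorem fst_ne_bot_of_mem_support_singleton {t : Tok} {q : Tok × Set Unit} (ht : t ≠ Tok.bot)
    (h : q ∈ (Mp p S [t]).support) : q.1 ≠ Tok.bot := by
  cases t with
  | a =>
    rw [Mp, if_neg (List.cons_ne_nil _ _), if_pos rfl] at h
    split_ifs at h
    · simp [(PMF.mem_support_pure_iff _ _).1 h]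
    · rcases mem_support_twoPoint h with rfl | rfl <;> simp
  | b =>
    rw [Mp, if_neg (List.cons_ne_nil _ _), if_neg (by simp), if_pos rfl] at h
    split_ifs at h <;> simp [(PMF.mem_support_pure_iff _ _).1 h]
  | bot => exact absurd rfl ht

theorem eq_of_isTerminal_of_traceProb_ne_zero {w : List (Tok × Set Unit)}
    (hw : IsTerminal Tok.bot w) (h : traceProb (Mp p) S [] w ≠ 0) :
    ∃ q₁ q₂, w = [q₁, q₂, (Tok.bot, ∅)] := by
  match w, hw, h with
  | [], hw, _ => simp [IsTerminal] at hw
  | [q₁], hw, h =>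
    simp only [traceProb, mul_one] at h
    exact absurd (by simpa [IsTerminal] using hw.1)
      (fst_ne_bot_of_mem_support_nil ((PMF.mem_support_iff _ _).2 h))
  | [q₁, q₂], hw, h =>
    simp only [traceProb, mul_one, List.nil_append, ne_eq, mul_eq_zero, not_or] at h
    exact absurd (by simpa [IsTerminal] using hw.1)
      (fst_ne_bot_of_mem_support_singleton (fst_ne_bot_of_mem_support_nil h.1) h.2)
  | q₁ :: q₂ :: q₃ :: w, hw, h =>
    simp only [traceProb, List.nil_append, List.singleton_append, ne_eq, mul_eq_zero,
      not_or] at h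
    have hq₃ : q₃ = (Tok.bot, ∅) := by
      simpa [cons_cons] using (PMF.mem_support_iff _ _).2 h.2.2.1
    subst hq₃
    cases w with
    | nil => exact ⟨q₁, q₂, rfl⟩
    | cons q w => exact absurd rfl (hw.2 Tok.bot (by simp))

theorem traceProb_triple (q₁ q₂ : Tok × Set Unit) :
    traceProb (Mp p) S [] [q₁, q₂, (Tok.bot, ∅)] = Mp p S [] q₁ * Mp p S [q₁.1] q₂ := by
  simp [traceProb, cons_cons]

theorem isTerminal_triple {q₁ q₂ : Tok × Set Unit}
    (h : Mp p S [] q₁ * Mp p S [q₁.1] q₂ ≠ 0) : IsTerminal Tok.bot [q₁, q₂, (Tok.bot, ∅)] := by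
  obtain ⟨h₁, h₂⟩ := mul_ne_zero_iff.1 h
  have hq₁ := fst_ne_bot_of_mem_support_nil ((PMF.mem_support_iff _ _).2 h₁)
  have hq₂ := fst_ne_bot_of_mem_support_singleton hq₁ ((PMF.mem_support_iff _ _).2 h₂)
  simp [IsTerminal, hq₁, hq₂]

/-- Every run of `Mp p` from the empty prompt emits two tokens and then `⊥`, so its rollout is
this two-step distribution. -/
def rollout (p : ℝ) (S : Set Unit) : PMF (List Tok × Set Unit) :=
  (Mp p S []).bind fun q₁ => (Mp p S [q₁.1]).map fun q₂ => ([q₁.1, q₂.1, Tok.bot], q₁.2 ∪ q₂.2)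

theorem rolloutK_nil : rolloutK Tok.bot (Mp p) S [] = (rollout p S).toOuterMeasure := by
  funext E
  let triple : (Tok × Set Unit) × (Tok × Set Unit) → List (Tok × Set Unit) :=
    fun q => [q.1, q.2, (Tok.bot, ∅)]
  have htriple : triple.Injective := fun q q' h => by
    simp only [triple, List.cons.injEq, and_true] at h
    exact Prod.ext h.1 h.2
  rw [rolloutK_eq_tsum, ← htriple.tsum_eq, rollout, PMF.toOuterMeasure_bind_apply,
    ENNReal.tsum_prod']
  · refine tsum_congr fun q₁ => ?_
    rw [PMF.toOuterMeasure_map_apply, PMF.toOuterMeasure_apply, ← ENNReal.tsum_mul_left]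
    refine tsum_congr fun q₂ => ?_
    have houtcome : rolloutOutcome [] (triple (q₁, q₂)) =
        ([q₁.1, q₂.1, Tok.bot], q₁.2 ∪ q₂.2) := by
      simp [triple, rolloutOutcome, creditOf]
    rw [traceProb_triple, houtcome, Set.indicator_apply, Set.mem_preimage, mul_ite, mul_zero]
    by_cases h : Mp p S [] q₁ * Mp p S [q₁.1] q₂ = 0
    · simp [h]
    · simp only [triple, isTerminal_triple h, true_and]
  · intro w hw
    obtain ⟨⟨hT, -⟩, h⟩ := ite_ne_right_iff.1 hw
    obtain ⟨q₁, q₂, rfl⟩ := eq_of_isTerminal_of_traceProb_ne_zero hT h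
    exact ⟨(q₁, q₂), rfl⟩

theorem rollout_univ_uncredited :
    (rollout p Set.univ).toOuterMeasure {o | () ∉ o.2} = min (ENNReal.ofReal p) 1 * 2⁻¹ := by
  rw [rollout, nil, toOuterMeasure_twoPoint_bind]
  simp [singleton_a_univ, singleton_b_univ, PMF.toOuterMeasure_map_apply,
    toOuterMeasure_twoPoint, PMF.toOuterMeasure_pure_apply]

theorem rollout_univ_ab_uncredited :
    (rollout p Set.univ).toOuterMeasure ({([Tok.a, Tok.b, Tok.bot], ∅)} ∩ {o | () ∉ o.2}) =
      min (ENNReal.ofReal p) 1 * 2⁻¹ := by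
  rw [rollout, nil, toOuterMeasure_twoPoint_bind]
  simp [singleton_a_univ, singleton_b_univ, PMF.toOuterMeasure_map_apply,
    toOuterMeasure_twoPoint, PMF.toOuterMeasure_pure_apply]

theorem prCond_rollout_univ_uncredited (hp : 0 < p) :
    prCond (rollout p Set.univ).toOuterMeasure {o | () ∉ o.2}
      {([Tok.a, Tok.b, Tok.bot], ∅)} = 1 := by
  rw [prCond, rollout_univ_uncredited, rollout_univ_ab_uncredited,
    ENNReal.div_self (by simp [hp]) (ENNReal.mul_ne_top (by simp) (by simp))]

theorem rollout_empty_ab :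
    (rollout p ∅).toOuterMeasure {([Tok.a, Tok.b, Tok.bot], ∅)} = min (ENNReal.ofReal p) 1 := by
  rw [rollout, nil, toOuterMeasure_twoPoint_bind]
  simp [singleton_a_empty, singleton_b_empty, PMF.toOuterMeasure_map_apply,
    PMF.toOuterMeasure_pure_apply]

end Mp

theorem stmt5_general (ε' p : ℝ) (hp0 : 0 < p) (hG : IsCCA ε' 0 (rolloutK Tok.bot (Mp p))) :
    ε' ≥ -Real.log p := by
  rcases hG Set.univ [] () trivial with hcredited | hclose
  · rw [Mp.rolloutK_nil] at hcredited
    refine absurd hcredited (PMF.toOuterMeasure_ne_one_of_compl_ne_zero ?_)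
    rw [Set.compl_ofPred, Mp.rollout_univ_uncredited]
    simp [hp0]
  · have hdiff : (Set.univ \ {()} : Set Unit) = ∅ := Set.sdiff_eq_empty.2 fun _ _ => rfl
    have h := (hclose {([Tok.a, Tok.b, Tok.bot], ∅)}).1
    rw [Mp.rolloutK_nil, Mp.rolloutK_nil, Mp.prCond_rollout_univ_uncredited hp0, hdiff,
      Mp.rollout_empty_ab, ENNReal.ofReal_zero, add_zero] at h
    have hexp : 1 ≤ Real.exp ε' * p := by
      rw [← ENNReal.one_le_ofReal, ENNReal.ofReal_mul (Real.exp_pos ε').le]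
      exact h.trans (by gcongr; exact min_le_left _ _)
    have hlog := Real.log_le_log one_pos hexp
    rw [Real.log_one, Real.log_mul (Real.exp_pos ε').ne' hp0.ne', Real.log_exp] at hlog
    linarith

/-- For `ε ≥ 0` and `0 < p < e^{-ε}`: if the crediting rollout of the counterexample
predictor `M̃_p` is `(ε',0)`-CCA for some `ε' ≥ 0`, then `ε' ≥ -ln p`. -/
theorem stmt5 (ε ε' p : ℝ) (hε : 0 ≤ ε) (hp0 : 0 < p) (hp : p < Real.exp (-ε))
    (hε' : 0 ≤ ε') (hG : IsCCA ε' 0 (rolloutK Tok.bot (Mp p))) :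
    ε' ≥ -Real.log p :=
  stmt5_general ε' p hp0 hG

end CCA
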